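/- Let F be a CNF with n variables whose incidence graph has pathwidth p. Then F can be computed by an OBDD of size O(2^p · n). Consequently, since pathwidth is O(k·log n) for treewidth k, a CNF with n variables whose incidence graph has treewidth k can be computed by an OBDD of size n^{O(k)}. -/

import Mathlib

/-!
Order the variables by the first bag of the path decomposition that contains them. After fixing
the first `t` variables, let `j` be the first bag of variable `t`. A clause outside bag `j` that
still has an unfixed variable has all its fixed variables inside bag `j`, because bag `j`
separates the earlier bags from the later ones. Hence the subfunction is determined by one bit
(are all fully fixed clauses satisfied?) and by the set of true variables and satisfied clauses
in bag `j`: at most `2 ^ (p + 2)` subfunctions per level, and a layered OBDD with one node per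
subfunction and level has `(n + 1) * 2 ^ (p + 2)` nodes.

For a tree decomposition of width `k`, a bag minimising the total distance to the variables
splits the remaining vertices into branches, each holding at most half of the variables.
Recursing on the branches, concatenating their path decompositions and adding the bag to every
bag gives a path decomposition of width `(k + 1) * Nat.size n + 1`. Only variables are counted:
every edge of the incidence graph has a variable end, so a set without variables is independent.
-/

/-- An OBDD over `n` Boolean variables, whose global variable order is the order
of the indices `Fin n`.  Nodes are `Fin size`; a node labelled `Sum.inr b` is a
sink with value `b`; a node labelled `Sum.inl i` reads variable `i` and branches
to `lo`/`hi`.  Along every edge the variable index strictly increases, so along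
every root-to-sink path the variables appear according to the fixed order. -/
structure OBDD (n : ℕ) where
  size : ℕ
  root : Fin size
  label : Fin size → Fin n ⊕ Bool
  lo : Fin size → Fin size
  hi : Fin size → Fin size
  increasing : ∀ u (i : Fin n), label u = Sum.inl i →
    (∀ j : Fin n, label (lo u) = Sum.inl j → i < j) ∧
    (∀ j : Fin n, label (hi u) = Sum.inl j → i < j)

def OBDD.evalAux {n : ℕ} (D : OBDD n) : ℕ → Fin D.size → (Fin n → Bool) → Bool
  | 0, _, _ => false
  | fuel + 1, u, x =>
    match D.label u with
    | Sum.inr b => b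
    | Sum.inl i => D.evalAux fuel (if x i then D.hi u else D.lo u) x

/-- The Boolean function computed by an OBDD (by `increasing`, a sink is always
reached within `n + 1` steps). -/
def OBDD.eval {n : ℕ} (D : OBDD n) (x : Fin n → Bool) : Bool :=
  D.evalAux (n + 1) D.root x

/-- `D` computes the Boolean function `F` on variable set `V`, where the
bijection `π` lists the variables in the order used by `D`. -/
def OBDD.Computes {n : ℕ} {V : Type*} (D : OBDD n) (F : (V → Bool) → Bool)
    (π : Fin n ≃ V) : Prop :=
  ∀ x : V → Bool, D.eval (fun i => x (π i)) = F x

/-- The subfunction of `F` obtained by fixing the first `t` variables (in the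
order `π`) according to `a`. -/
def subfun {n : ℕ} {V : Type*} (F : (V → Bool) → Bool) (π : Fin n ≃ V)
    (t : ℕ) (a : Fin n → Bool) : (V → Bool) → Bool :=
  fun y => F (fun v => if ((π.symm v : Fin n) : ℕ) < t then a (π.symm v) else y v)

/- A CNF with clause set `ι` and variable set `ν` is modelled as
`occ : ι → ν → Option Bool`: `occ c v = some b` means that variable `v` occurs
in clause `c` with polarity `b`. -/

/-- The incidence graph of the CNF `occ`: variable vertices and clause vertices,
with a variable adjacent to a clause iff it occurs in it. -/
def incGraph {ν ι : Type*} (occ : ι → ν → Option Bool) : SimpleGraph (ν ⊕ ι) :=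
  SimpleGraph.fromRel (fun a b =>
    match a, b with
    | Sum.inl v, Sum.inr c => (occ c v).isSome
    | _, _ => False)

/-- The Boolean function of the CNF `occ`: every clause contains a literal made
true by the assignment. -/
noncomputable def cnfEval {ν ι : Type*} (occ : ι → ν → Option Bool) :
    (ν → Bool) → Bool :=
  fun x => @decide (∀ c : ι, ∃ v b, occ c v = some b ∧ x v = b)
    (Classical.propDecidable _)

/-- A path decomposition of `G` with bags `B 0, ..., B (rr-1)` in path order:
every vertex is in some bag, every edge is inside some bag, and the bags
containing any fixed vertex form a contiguous interval. -/
def IsPathDecomp {X : Type*} (G : SimpleGraph X) (rr : ℕ)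
    (B : Fin rr → Finset X) : Prop :=
  (∀ w, ∃ j, w ∈ B j) ∧
  (∀ a b, G.Adj a b → ∃ j, a ∈ B j ∧ b ∈ B j) ∧
  (∀ w (j₁ j₂ j₃ : Fin rr), j₁ ≤ j₂ → j₂ ≤ j₃ → w ∈ B j₁ → w ∈ B j₃ → w ∈ B j₂)

/-- `(T, bag)` is a tree decomposition of `G`: `T` is a tree, every vertex is in
some bag, every edge is inside some bag, and the bags containing any fixed
vertex induce a connected subgraph of `T`. -/
def IsTreeDecomp {V ι : Type*} (G : SimpleGraph V) (T : SimpleGraph ι)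
    (bag : ι → Finset V) : Prop :=
  T.IsTree ∧
  (∀ v, ∃ i, v ∈ bag i) ∧
  (∀ u v, G.Adj u v → ∃ i, u ∈ bag i ∧ v ∈ bag i) ∧
  (∀ v, (SimpleGraph.induce {i | v ∈ bag i} T).Connected)

open Finset

section Subfunctions

variable {n : ℕ} {V : Type*} (F : (V → Bool) → Bool) (π : Fin n ≃ V)

theorem subfun_zero (a : Fin n → Bool) : subfun F π 0 a = F := by
  funext y
  simp [subfun]

theorem subfun_apply_eq_of_le {t : ℕ} (ht : n ≤ t) (a : Fin n → Bool) (y y' : V → Bool) :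
    subfun F π t a y = subfun F π t a y' := by
  simp [subfun, fun v => (π.symm v).isLt.trans_le ht]

theorem subfun_congr {t : ℕ} {a a' : Fin n → Bool} (h : ∀ i : Fin n, (i : ℕ) < t → a i = a' i) :
    subfun F π t a = subfun F π t a' := by
  funext y
  unfold subfun
  congr 1
  funext v
  split_ifs with hv
  exacts [h _ hv, rfl]

theorem subfun_succ {t : ℕ} (ht : t < n) (a : Fin n → Bool) (y : V → Bool)
    (hy : a ⟨t, ht⟩ = y (π ⟨t, ht⟩)) :
    subfun F π (t + 1) a y = subfun F π t a y := by
  unfold subfun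
  congr 1
  funext v
  obtain ⟨i, rfl⟩ := π.surjective v
  rcases lt_trichotomy (i : ℕ) t with hi | rfl | hi
  · simp [hi, hi.trans (Nat.lt_succ_self t)]
  · simpa using hy
  · simp [hi.not_gt, (Nat.succ_le_of_lt hi).not_gt]

theorem card_image_subfun_le_two [DecidableEq ((V → Bool) → Bool)] {t : ℕ} (ht : n ≤ t) :
    #(univ.image (subfun F π t)) ≤ 2 := by
  have hconst : univ.image (subfun F π t) ⊆ univ.image fun b : Bool => fun _ => b := by
    intro g hg
    obtain ⟨a, -, rfl⟩ := mem_image.mp hg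
    exact mem_image.mpr ⟨subfun F π t a fun _ => false, mem_univ _,
      funext fun y => subfun_apply_eq_of_le F π ht a _ y⟩
  exact (card_le_card hconst).trans (card_image_le.trans (by simp))

end Subfunctions

namespace OBDD

variable {n m : ℕ}

def layerLabel (out : Fin m → Bool) (u : Fin (n + 1) × Fin m) : Fin n ⊕ Bool :=
  if h : (u.1 : ℕ) < n then .inl ⟨u.1, h⟩ else .inr (out u.2)

def layerSucc (next : Fin n → Fin m → Bool → Fin m) (b : Bool) (u : Fin (n + 1) × Fin m) :
    Fin (n + 1) × Fin m :=
  if h : (u.1 : ℕ) < n then (⟨u.1 + 1, by omega⟩, next ⟨u.1, h⟩ u.2 b) else u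

theorem layerLabel_layerSucc {out : Fin m → Bool} {next : Fin n → Fin m → Bool → Fin m}
    {u : Fin (n + 1) × Fin m} {i j : Fin n} (b : Bool) (hi : layerLabel out u = .inl i)
    (hj : layerLabel out (layerSucc next b u) = .inl j) : i < j := by
  unfold layerLabel layerSucc at *
  split_ifs at hi hj
  cases hi
  cases hj
  exact Fin.mk_lt_mk.mpr (Nat.lt_succ_self _)

/-- The OBDD with `m` nodes on each of the levels `0, …, n`: a node `(t, r)` with `t < n` reads
variable `t` and moves to `(t + 1, next t r b)`; a node `(n, r)` is a sink with value `out r`. -/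
def layered (next : Fin n → Fin m → Bool → Fin m) (out : Fin m → Bool) (start : Fin m) :
    OBDD n where
  size := (n + 1) * m
  root := finProdFinEquiv (0, start)
  label u := layerLabel out (finProdFinEquiv.symm u)
  lo u := finProdFinEquiv (layerSucc next false (finProdFinEquiv.symm u))
  hi u := finProdFinEquiv (layerSucc next true (finProdFinEquiv.symm u))
  increasing u i hi := by
    simp only [Equiv.symm_apply_apply]
    exact ⟨fun _ => layerLabel_layerSucc false hi, fun _ => layerLabel_layerSucc true hi⟩

theorem layered_eval (next : Fin n → Fin m → Bool → Fin m) (out : Fin m → Bool) (start : Fin m)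
    (f : ℕ → Fin m → (Fin n → Bool) → Bool) (hout : ∀ r x, f n r x = out r)
    (hnext : ∀ (t : Fin n) r x, f (t + 1) (next t r (x t)) x = f t r x) (x : Fin n → Bool) :
    (layered next out start).eval x = f 0 start x := by
  suffices h : ∀ s t (ht : t ≤ n), n ≤ s + t → ∀ r,
      (layered next out start).evalAux (s + 1) (finProdFinEquiv (⟨t, by omega⟩, r)) x = f t r x from
    h n 0 (Nat.zero_le n) (by omega) start
  intro s
  induction s with
  | zero =>
    intro t ht hs r
    obtain rfl : t = n := by omega
    simp [OBDD.evalAux, layered, layerLabel, hout]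
  | succ s ih =>
    intro t ht hs r
    by_cases htn : t < n
    · rw [← hnext ⟨t, htn⟩, ← ih (t + 1) htn (by omega)]
      cases hx : x ⟨t, htn⟩ <;> simp [OBDD.evalAux, layered, layerLabel, layerSucc, htn, hx]
    · obtain rfl : t = n := by omega
      simp [OBDD.evalAux, layered, layerLabel, hout]

end OBDD

theorem exists_code_of_card_image_le {α β : Type*} [Fintype α] [Nonempty α] [DecidableEq β]
    (f : α → β) {m : ℕ} (hm : #(univ.image f) ≤ m) :
    ∃ (code : α → Fin m) (rep : Fin m → α), ∀ a, f (rep (code a)) = f a := by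
  let enc : univ.image f ↪ Fin m :=
    (univ.image f).equivFin.toEmbedding.trans (Fin.castLEEmb hm)
  let code a := enc ⟨f a, mem_image_of_mem f (mem_univ a)⟩
  refine ⟨code, Function.invFun code, fun a => ?_⟩
  have h : code (Function.invFun code (code a)) = code a := Function.invFun_eq ⟨a, rfl⟩
  exact congrArg Subtype.val (enc.injective h)

/-- Node `(t, r)` stands for the `r`-th subfunction obtained by fixing the first `t` variables. -/
theorem exists_obdd_of_card_subfun_le {n : ℕ} {V : Type*} [DecidableEq ((V → Bool) → Bool)]
    (F : (V → Bool) → Bool) (π : Fin n ≃ V) (m : ℕ)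
    (hm : ∀ t, #(univ.image (subfun F π t)) ≤ m) :
    ∃ D : OBDD n, D.Computes F π ∧ D.size = (n + 1) * m := by
  choose code rep hrep using fun t => exists_code_of_card_image_le (subfun F π t) (hm t)
  let next (t : Fin n) (r : Fin m) (b : Bool) : Fin m :=
    code (t + 1) (Function.update (rep t r) t b)
  let out (r : Fin m) : Bool := subfun F π n (rep n r) fun _ => false
  refine ⟨OBDD.layered next out (code 0 fun _ => false), fun y => ?_, rfl⟩
  rw [OBDD.layered_eval next out _ (fun t r x => subfun F π t (rep t r) (x ∘ π.symm))]
  · simp [hrep, subfun_zero, Function.comp_def]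
  · exact fun r x => subfun_apply_eq_of_le F π le_rfl _ _ _
  · intro t r x
    simp only [next, hrep]
    rw [subfun_succ F π t.isLt _ _ (by simp)]
    exact congrFun (subfun_congr F π fun i hi =>
      Function.update_of_ne (Fin.ne_of_lt hi) _ _) _

section CNF

variable {ν ι : Type*} (occ : ι → ν → Option Bool)

def ClauseSatOn (P : ν → Prop) (α : ν → Bool) (c : ι) : Prop :=
  ∃ v, P v ∧ occ c v = some (α v)

def ClauseWithin (P : ν → Prop) (c : ι) : Prop :=
  ∀ v, occ c v ≠ none → P v

/-- Every edge of the incidence graph between a variable in `P` and a clause not within `P` has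
an end in `S`. -/
def SeparatesFixed (P : ν → Prop) (S : Finset (ν ⊕ ι)) : Prop :=
  ∀ c, ¬ ClauseWithin occ P c → .inr c ∉ S → ∀ v, P v → occ c v ≠ none → .inl v ∈ S

open Classical in
noncomputable def cnfSignature (P : ν → Prop) (S : Finset (ν ⊕ ι)) (α : ν → Bool) :
    Bool × Finset (ν ⊕ ι) :=
  (decide (∀ c, ClauseWithin occ P c → ClauseSatOn occ P α c),
    S.filter (Sum.elim (fun v => P v ∧ α v = true) (ClauseSatOn occ P α)))

theorem cnfEval_eq_true {x : ν → Bool} :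
    cnfEval occ x = true ↔ ∀ c, ∃ v b, occ c v = some b ∧ x v = b :=
  @decide_eq_true_iff _ (Classical.propDecidable _)

variable {occ} (P : ν → Prop) {α α' : ν → Bool}

theorem cnfEval_ite_eq_true_of_eq_true [DecidablePred P]
    (hwithin : (∀ c, ClauseWithin occ P c → ClauseSatOn occ P α c) →
      ∀ c, ClauseWithin occ P c → ClauseSatOn occ P α' c)
    (hsat : ∀ c, ¬ ClauseWithin occ P c → ClauseSatOn occ P α c → ClauseSatOn occ P α' c)
    {y : ν → Bool} (h : cnfEval occ (fun v => if P v then α v else y v) = true) :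
    cnfEval occ (fun v => if P v then α' v else y v) = true := by
  rw [cnfEval_eq_true] at h ⊢
  have hsatOn : ∀ c v, P v → occ c v = some (if P v then α v else y v) →
      ClauseSatOn occ P α c := fun c v hv hocc => ⟨v, hv, by simpa [hv] using hocc⟩
  have hall : ∀ c, ClauseWithin occ P c → ClauseSatOn occ P α c := fun c hc => by
    obtain ⟨v, b, hocc, rfl⟩ := h c
    exact hsatOn c v (hc v (by simp [hocc])) hocc
  intro c
  obtain ⟨v, b, hocc, rfl⟩ := h c
  by_cases hv : P v
  · obtain ⟨w, hw, hocc'⟩ : ClauseSatOn occ P α' c := by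
      by_cases hc : ClauseWithin occ P c
      · exact hwithin hall c hc
      · exact hsat c hc (hsatOn c v hv hocc)
    exact ⟨w, _, hocc', by simp [hw]⟩
  · exact ⟨v, _, hocc, by simp [hv]⟩

theorem cnfEval_ite_eq [DecidablePred P]
    (hwithin : (∀ c, ClauseWithin occ P c → ClauseSatOn occ P α c) ↔
      ∀ c, ClauseWithin occ P c → ClauseSatOn occ P α' c)
    (hsat : ∀ c, ¬ ClauseWithin occ P c → (ClauseSatOn occ P α c ↔ ClauseSatOn occ P α' c))
    (y : ν → Bool) :
    cnfEval occ (fun v => if P v then α v else y v) =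
      cnfEval occ (fun v => if P v then α' v else y v) :=
  Bool.eq_iff_iff.mpr
    ⟨cnfEval_ite_eq_true_of_eq_true P hwithin.mp fun c hc => (hsat c hc).mp,
      cnfEval_ite_eq_true_of_eq_true P hwithin.mpr fun c hc => (hsat c hc).mpr⟩

theorem cnfEval_ite_factorsThrough [DecidablePred P] {S : Finset (ν ⊕ ι)}
    (hS : SeparatesFixed occ P S) :
    (fun α y : ν → Bool => cnfEval occ fun v => if P v then α v else y v).FactorsThrough
      (cnfSignature occ P S) := by
  classical
  intro α α' h
  simp only [cnfSignature, Prod.mk.injEq, decide_eq_decide, filter_inj'] at h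
  obtain ⟨hwithin, hbag⟩ := h
  funext y
  refine cnfEval_ite_eq P hwithin (fun c hc => ?_) y
  by_cases hcS : .inr c ∈ S
  · exact hbag hcS
  have hagree : ∀ v, P v → occ c v ≠ none → α v = α' v := fun v hv hocc => by
    simpa [hv] using hbag (hS c hc hcS v hv hocc)
  constructor
  · rintro ⟨v, hv, hocc⟩
    exact ⟨v, hv, hocc.trans (congrArg some (hagree v hv (by simp [hocc])))⟩
  · rintro ⟨v, hv, hocc⟩
    exact ⟨v, hv, hocc.trans (congrArg some (hagree v hv (by simp [hocc])).symm)⟩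

theorem cnfSignature_mem (S : Finset (ν ⊕ ι)) (α : ν → Bool) :
    cnfSignature occ P S α ∈ (univ : Finset Bool) ×ˢ S.powerset := by
  classical
  exact mem_product.mpr ⟨mem_univ _, mem_powerset.mpr (filter_subset _ _)⟩

end CNF

section PathDecomp

variable {X : Type*} {G : SimpleGraph X} {rr : ℕ} {B : Fin rr → Finset X}

theorem IsPathDecomp.mem_or_mem_of_adj (hB : IsPathDecomp G rr B) {u x z : X} (hux : G.Adj u x)
    (hxz : G.Adj x z) {i j : Fin rr} (hij : i ≤ j) (hu : u ∈ B i) (hz : ∀ k, z ∈ B k → j ≤ k) :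
    u ∈ B j ∨ x ∈ B j := by
  obtain ⟨k₁, hu₁, hx₁⟩ := hB.2.1 u x hux
  obtain ⟨k₂, hx₂, hz₂⟩ := hB.2.1 x z hxz
  rcases le_total k₁ j with h | h
  · exact .inr (hB.2.2 x k₁ j k₂ h (hz k₂ hz₂) hx₁ hx₂)
  · exact .inl (hB.2.2 u i j k₁ hij h hu hu₁)

variable [DecidableEq X]

def IsPathDecomp.firstBag (hB : IsPathDecomp G rr B) (w : X) : Fin rr :=
  (univ.filter (w ∈ B ·)).min' (let ⟨j, hj⟩ := hB.1 w; ⟨j, by simpa using hj⟩)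

theorem IsPathDecomp.mem_firstBag (hB : IsPathDecomp G rr B) (w : X) : w ∈ B (hB.firstBag w) :=
  (mem_filter.mp (min'_mem (univ.filter (w ∈ B ·)) _)).2

theorem IsPathDecomp.firstBag_le (hB : IsPathDecomp G rr B) {w : X} {j : Fin rr} (h : w ∈ B j) :
    hB.firstBag w ≤ j :=
  min'_le _ _ (by simpa using h)

end PathDecomp

theorem card_image_le_card_image_of_factorsThrough {α β γ : Type*} [DecidableEq β]
    [DecidableEq γ] {f : α → β} {g : α → γ} (h : f.FactorsThrough g) (s : Finset α) :
    #(s.image f) ≤ #(s.image g) := by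
  rcases s.eq_empty_or_nonempty with rfl | ⟨a₀, -⟩
  · simp
  calc #(s.image f) = #((s.image g).image (Function.extend g f fun _ => f a₀)) := by
        rw [image_image]
        congr 1
        exact image_congr fun a _ => (h.extend_apply _ a).symm
    _ ≤ #(s.image g) := card_image_le

theorem incGraph_adj_inl_inr {ν ι : Type*} {occ : ι → ν → Option Bool} {v : ν} {c : ι} :
    (incGraph occ).Adj (.inl v) (.inr c) ↔ occ c v ≠ none := by
  simp [incGraph, Option.isSome_iff_ne_none]

section SubfunctionCount

variable {nv p rr : ℕ} {ι : Type*} [DecidableEq ι] {occ : ι → Fin nv → Option Bool}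
  {B : Fin rr → Finset (Fin nv ⊕ ι)}

def IsPathDecomp.varOrder (hB : IsPathDecomp (incGraph occ) rr B) : Fin nv ≃ Fin nv :=
  Tuple.sort fun v => hB.firstBag (.inl v)

theorem IsPathDecomp.separatesFixed_firstBag (hB : IsPathDecomp (incGraph occ) rr B) {t : ℕ}
    (ht : t < nv) :
    SeparatesFixed occ (fun v => ((hB.varOrder.symm v : Fin nv) : ℕ) < t)
      (B (hB.firstBag (.inl (hB.varOrder ⟨t, ht⟩)))) := by
  have hmono : Monotone ((fun v => hB.firstBag (.inl v)) ∘ hB.varOrder) := Tuple.monotone_sort _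
  intro c hc hcj v hv hocc
  obtain ⟨w, hwocc, hw⟩ : ∃ w, occ c w ≠ none ∧ ¬ (hB.varOrder.symm w : ℕ) < t := by
    simpa [ClauseWithin] using hc
  refine (hB.mem_or_mem_of_adj (incGraph_adj_inl_inr.mpr hocc)
    (incGraph_adj_inl_inr.mpr hwocc).symm ?_ (hB.mem_firstBag _) fun k hk => ?_).resolve_right hcj
  · simpa using hmono (show hB.varOrder.symm v ≤ ⟨t, ht⟩ from Fin.mk_le_mk.mpr hv.le)
  · refine le_trans ?_ (hB.firstBag_le hk)
    simpa using hmono (show ⟨t, ht⟩ ≤ hB.varOrder.symm w from Fin.mk_le_mk.mpr (not_lt.mp hw))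

theorem IsPathDecomp.card_image_subfun_le (hB : IsPathDecomp (incGraph occ) rr B)
    (hw : ∀ j, #(B j) ≤ p + 1) (t : ℕ) :
    #(univ.image (subfun (cnfEval occ) hB.varOrder t)) ≤ 2 ^ (p + 2) := by
  classical
  rcases le_or_gt nv t with hnt | htn
  · exact (card_image_subfun_le_two _ _ hnt).trans (Nat.le_self_pow (by omega) 2)
  set S := B (hB.firstBag (.inl (hB.varOrder ⟨t, htn⟩)))
  let P v := ((hB.varOrder.symm v : Fin nv) : ℕ) < t
  let sig (a : Fin nv → Bool) := cnfSignature occ P S fun v => a (hB.varOrder.symm v)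
  have hfactor : (subfun (cnfEval occ) hB.varOrder t).FactorsThrough sig := fun a a' h =>
    cnfEval_ite_factorsThrough P (hB.separatesFixed_firstBag htn) h
  calc #(univ.image (subfun (cnfEval occ) hB.varOrder t))
      ≤ #(univ.image sig) := card_image_le_card_image_of_factorsThrough hfactor _
    _ ≤ #((univ : Finset Bool) ×ˢ S.powerset) :=
        card_le_card (image_subset_iff.mpr fun a _ => cnfSignature_mem P S _)
    _ = 2 * 2 ^ #S := by simp
    _ ≤ 2 ^ (p + 2) := by
        rw [pow_succ' 2 (p + 1)]
        exact Nat.mul_le_mul_left 2 (Nat.pow_le_pow_right two_pos (hw _))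

end SubfunctionCount

theorem exists_obdd_of_isPathDecomp {nv p rr : ℕ} {ι : Type*} [DecidableEq ι]
    {occ : ι → Fin nv → Option Bool} {B : Fin rr → Finset (Fin nv ⊕ ι)}
    (hB : IsPathDecomp (incGraph occ) rr B) (hw : ∀ j, #(B j) ≤ p + 1) :
    ∃ (π : Fin nv ≃ Fin nv) (D : OBDD nv),
      D.Computes (cnfEval occ) π ∧ D.size ≤ 4 * 2 ^ p * (nv + 1) := by
  obtain ⟨D, hD, hsize⟩ :=
    exists_obdd_of_card_subfun_le _ hB.varOrder _ (hB.card_image_subfun_le hw)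
  exact ⟨hB.varOrder, D, hD, (hsize.trans (by ring)).le⟩

section

variable {V : Type*} (G : SimpleGraph V)

/-- A path decomposition of the subgraph induced on `A`, with bags indexed by `ℕ`: those below
`length` suffice to cover `A` and its edges. -/
structure PathDecompOn (A : Finset V) (w : ℕ) where
  length : ℕ
  bag : ℕ → Finset V
  bag_subset : ∀ j, bag j ⊆ A
  exists_mem : ∀ x ∈ A, ∃ j < length, x ∈ bag j
  exists_mem_mem : ∀ a ∈ A, ∀ b ∈ A, G.Adj a b → ∃ j < length, a ∈ bag j ∧ b ∈ bag j
  mem_of_le_of_le : ∀ x i j k, i ≤ j → j ≤ k → x ∈ bag i → x ∈ bag k → x ∈ bag j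
  card_bag_le : ∀ j, #(bag j) ≤ w

def Separated (A₁ A₂ : Finset V) : Prop :=
  Disjoint A₁ A₂ ∧ ∀ a ∈ A₁, ∀ b ∈ A₂, ¬ G.Adj a b

variable {G}

namespace PathDecompOn

def mono {A : Finset V} {w w' : ℕ} (D : PathDecompOn G A w) (h : w ≤ w') :
    PathDecompOn G A w' :=
  { D with card_bag_le := fun j => (D.card_bag_le j).trans h }

def empty (w : ℕ) : PathDecompOn G ∅ w where
  length := 0
  bag _ := ∅
  bag_subset _ := subset_rfl
  exists_mem _ h := absurd h (notMem_empty _)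
  exists_mem_mem _ h := absurd h (notMem_empty _)
  mem_of_le_of_le _ _ _ _ _ _ h := absurd h (notMem_empty _)
  card_bag_le _ := by simp

def singleton (x : V) : PathDecompOn G {x} 1 where
  length := 1
  bag _ := {x}
  bag_subset _ := subset_rfl
  exists_mem _ h := ⟨0, one_pos, h⟩
  exists_mem_mem _ ha _ hb _ := ⟨0, one_pos, ha, hb⟩
  mem_of_le_of_le _ _ _ _ _ _ h _ := h
  card_bag_le _ := by simp

theorem isPathDecomp [Fintype V] {w : ℕ} (D : PathDecompOn G univ w) :
    IsPathDecomp G D.length fun j => D.bag j := by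
  refine ⟨fun x => ?_, fun a b hab => ?_, fun x i j k hij hjk => D.mem_of_le_of_le x i j k hij hjk⟩
  · obtain ⟨j, hj, hx⟩ := D.exists_mem x (mem_univ x)
    exact ⟨⟨j, hj⟩, hx⟩
  · obtain ⟨j, hj, hx⟩ := D.exists_mem_mem a (mem_univ a) b (mem_univ b) hab
    exact ⟨⟨j, hj⟩, hx⟩

variable [DecidableEq V]

def append {A₁ A₂ : Finset V} {w : ℕ} (D₁ : PathDecompOn G A₁ w) (D₂ : PathDecompOn G A₂ w)
    (hsep : Separated G A₁ A₂) : PathDecompOn G (A₁ ∪ A₂) w where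
  length := D₁.length + D₂.length
  bag j := if j < D₁.length then D₁.bag j else D₂.bag (j - D₁.length)
  bag_subset j := by
    split_ifs
    exacts [(D₁.bag_subset j).trans subset_union_left, (D₂.bag_subset _).trans subset_union_right]
  exists_mem x hx := by
    rcases mem_union.mp hx with hx | hx
    · obtain ⟨j, hj, hxj⟩ := D₁.exists_mem x hx
      exact ⟨j, by omega, by simpa [hj] using hxj⟩
    · obtain ⟨j, hj, hxj⟩ := D₂.exists_mem x hx
      exact ⟨D₁.length + j, by omega, by simpa using hxj⟩
  exists_mem_mem a ha b hb hab := by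
    rcases mem_union.mp ha with ha | ha <;> rcases mem_union.mp hb with hb | hb
    · obtain ⟨j, hj, hx⟩ := D₁.exists_mem_mem a ha b hb hab
      exact ⟨j, by omega, by simpa [hj] using hx⟩
    · exact absurd hab (hsep.2 a ha b hb)
    · exact absurd hab.symm (hsep.2 b hb a ha)
    · obtain ⟨j, hj, hx⟩ := D₂.exists_mem_mem a ha b hb hab
      exact ⟨D₁.length + j, by omega, by simpa using hx⟩
  mem_of_le_of_le x i j k hij hjk hi hk := by
    have hdisj := disjoint_left.mp hsep.1
    split_ifs at hi hk ⊢ <;> first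
      | omega
      | exact absurd ((D₂.bag_subset _) hk) (hdisj ((D₁.bag_subset _) hi))
      | exact absurd ((D₂.bag_subset _) hi) (hdisj ((D₁.bag_subset _) hk))
      | exact D₁.mem_of_le_of_le x i j k hij hjk hi hk
      | exact D₂.mem_of_le_of_le x _ _ _ (by omega) (by omega) hi hk
  card_bag_le j := by
    split_ifs
    exacts [D₁.card_bag_le j, D₂.card_bag_le _]

def insertAll {A : Finset V} {w : ℕ} (D : PathDecompOn G A w) (S : Finset V) :
    PathDecompOn G (A ∪ S) (w + #S) where
  length := D.length + 1
  bag j := D.bag j ∪ S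
  bag_subset j := union_subset_union (D.bag_subset j) subset_rfl
  exists_mem x hx := by
    rcases mem_union.mp hx with hx | hx
    · obtain ⟨j, hj, hxj⟩ := D.exists_mem x hx
      exact ⟨j, by omega, mem_union_left _ hxj⟩
    · exact ⟨0, by omega, mem_union_right _ hx⟩
  exists_mem_mem a ha b hb hab := by
    by_cases haS : a ∈ S <;> by_cases hbS : b ∈ S
    · exact ⟨0, by omega, mem_union_right _ haS, mem_union_right _ hbS⟩
    · obtain ⟨j, hj, hbj⟩ := D.exists_mem b ((mem_union.mp hb).resolve_right hbS)
      exact ⟨j, by omega, mem_union_right _ haS, mem_union_left _ hbj⟩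
    · obtain ⟨j, hj, haj⟩ := D.exists_mem a ((mem_union.mp ha).resolve_right haS)
      exact ⟨j, by omega, mem_union_left _ haj, mem_union_right _ hbS⟩
    · obtain ⟨j, hj, haj, hbj⟩ := D.exists_mem_mem a ((mem_union.mp ha).resolve_right haS) b
        ((mem_union.mp hb).resolve_right hbS) hab
      exact ⟨j, by omega, mem_union_left _ haj, mem_union_left _ hbj⟩
  mem_of_le_of_le x i j k hij hjk hi hk := by
    by_cases hxS : x ∈ S
    · exact mem_union_right _ hxS
    · exact mem_union_left _ (D.mem_of_le_of_le x i j k hij hjk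
        ((mem_union.mp hi).resolve_right hxS) ((mem_union.mp hk).resolve_right hxS))
  card_bag_le j := (card_union_le _ _).trans (Nat.add_le_add_right (D.card_bag_le j) _)

theorem nonempty_biUnion {κ : Type*} {w : ℕ} (s : Finset κ) (f : κ → Finset V)
    (hsep : (s : Set κ).Pairwise fun i j => Separated G (f i) (f j))
    (hf : ∀ i ∈ s, Nonempty (PathDecompOn G (f i) w)) :
    Nonempty (PathDecompOn G (s.biUnion f) w) := by
  classical
  induction s using Finset.induction_on with
  | empty => exact ⟨by simpa using empty w⟩
  | insert i s hi ih =>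
    rw [coe_insert, Set.pairwise_insert] at hsep
    obtain ⟨D₁⟩ := hf i (mem_insert_self i s)
    obtain ⟨D₂⟩ := ih hsep.1 fun j hj => hf j (mem_insert_of_mem hj)
    have hsep' : Separated G (f i) (s.biUnion f) := by
      have h j (hj : j ∈ s) := (hsep.2 j hj (ne_of_mem_of_not_mem hj hi).symm).1
      refine ⟨(disjoint_biUnion_right _ _ _).mpr fun j hj => (h j hj).1, fun a ha b hb => ?_⟩
      obtain ⟨j, hj, hbj⟩ := mem_biUnion.mp hb
      exact (h j hj).2 a ha b hbj
    rw [biUnion_insert]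
    exact ⟨D₁.append D₂ hsep'⟩

theorem nonempty_of_forall_not_adj {A : Finset V} (hA : ∀ a ∈ A, ∀ b ∈ A, ¬ G.Adj a b) :
    Nonempty (PathDecompOn G A 1) := by
  have := nonempty_biUnion (G := G) A ({·})
    (fun a ha b hb hab => ⟨disjoint_singleton.mpr hab, by simpa using hA a ha b hb⟩)
    fun x _ => ⟨singleton x⟩
  rwa [biUnion_singleton_eq_self] at this

end PathDecompOn

end

section Trees

variable {ι : Type*} {T : SimpleGraph ι}

def ReachableAvoiding (T : SimpleGraph ι) (i l l' : ι) : Prop :=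
  ∃ q : T.Walk l l', i ∉ q.support

namespace ReachableAvoiding

variable {i l l' l'' : ι}

theorem refl (h : l ≠ i) : ReachableAvoiding T i l l :=
  ⟨.nil, by simpa using h.symm⟩

theorem symm (h : ReachableAvoiding T i l l') : ReachableAvoiding T i l' l :=
  let ⟨q, hq⟩ := h
  ⟨q.reverse, by simpa using hq⟩

theorem trans (h : ReachableAvoiding T i l l') (h' : ReachableAvoiding T i l' l'') :
    ReachableAvoiding T i l l'' :=
  let ⟨q, hq⟩ := h
  let ⟨q', hq'⟩ := h'
  ⟨q.append q', by simp [SimpleGraph.Walk.mem_support_append_iff, hq, hq']⟩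

/-- The edge `ij` is a bridge. -/
theorem eq_of_adj (hT : T.IsAcyclic) {y j : ι} (hy : T.Adj i y) (hj : T.Adj i j)
    (h : ReachableAvoiding T i y j) : y = j := by
  obtain ⟨q, hq⟩ := h
  have hbridge := SimpleGraph.isBridge_iff_forall_walk_mem_edges.mp
    (SimpleGraph.isAcyclic_iff_forall_adj_isBridge.mp hT hj) (.cons hy q)
  rw [SimpleGraph.Walk.edges_cons, List.mem_cons] at hbridge
  rcases hbridge with h | h
  · exact (Sym2.congr_right.mp h).symm
  · exact absurd (q.fst_mem_support_of_mem_edges h) hq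

end ReachableAvoiding

theorem exists_adj_reachableAvoiding (hT : T.Connected) {i l : ι} (h : l ≠ i) :
    ∃ j, T.Adj i j ∧ ReachableAvoiding T i j l := by
  obtain ⟨q, hq⟩ := (hT i l).exists_walk_length_eq_dist
  cases q with
  | nil => exact absurd rfl h
  | cons hadj q =>
    exact ⟨_, hadj, q, ((SimpleGraph.Walk.cons_isPath_iff _ _).mp
      ((SimpleGraph.Walk.cons hadj q).isPath_of_length_eq_dist hq)).2⟩

theorem dist_eq_dist_add_one (hT : T.IsTree) {i j l : ι} (hij : T.Adj i j)
    (h : ReachableAvoiding T i j l) : T.dist i l = T.dist j l + 1 := by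
  have hli : l ≠ i := fun hli => h.elim fun q hq => hq (hli ▸ q.end_mem_support)
  obtain ⟨q, hq⟩ := hT.1.exists_walk_length_eq_dist i l
  cases q with
  | nil => exact absurd rfl hli
  | @cons _ y _ hiy q =>
    obtain ⟨-, hiq⟩ := (SimpleGraph.Walk.cons_isPath_iff _ _).mp
      ((SimpleGraph.Walk.cons hiy q).isPath_of_length_eq_dist hq)
    obtain rfl : y = j := ReachableAvoiding.eq_of_adj hT.2 hiy hij
      (ReachableAvoiding.trans ⟨q, hiq⟩ h.symm)
    have hle := hT.1.dist_triangle (u := i) (v := y) (w := l)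
    have := SimpleGraph.dist_le q
    rw [SimpleGraph.dist_eq_one_iff_adj.mpr hiy] at hle
    simp only [SimpleGraph.Walk.length_cons] at hq
    omega

/-- Moving from `i` to a neighbour `j` brings the points of `K` one step closer and the others at
most one step further; if `K` is a strict majority the total distance drops. -/
theorem sum_dist_lt_sum_dist (hT : T.IsTree) {i j : ι} (hij : T.Adj i j) {α : Type*}
    (f : α → ι) {S K : Finset α} [DecidableEq α] (hKS : K ⊆ S)
    (hK : ∀ a ∈ K, ReachableAvoiding T i j (f a)) (hheavy : #S < 2 * #K) :
    ∑ a ∈ S, T.dist j (f a) < ∑ a ∈ S, T.dist i (f a) := by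
  have hfar : ∀ a ∈ S \ K, T.dist j (f a) ≤ T.dist i (f a) + 1 := fun a _ => by
    have := hT.1.dist_triangle (u := j) (v := i) (w := f a)
    rw [SimpleGraph.dist_eq_one_iff_adj.mpr hij.symm] at this
    omega
  have hnear : ∀ a ∈ K, T.dist i (f a) = T.dist j (f a) + 1 := fun a ha =>
    dist_eq_dist_add_one hT hij (hK a ha)
  rw [← sum_sdiff hKS, ← sum_sdiff hKS (f := fun a => T.dist i (f a)), sum_congr rfl hnear,
    sum_add_distrib, sum_const, smul_eq_mul, mul_one]
  have := sum_le_sum hfar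
  rw [sum_add_distrib, sum_const, smul_eq_mul, mul_one] at this
  have := card_sdiff_add_card_eq_card hKS
  omega

end Trees

namespace IsTreeDecomp

variable {V ι : Type*} {G : SimpleGraph V} {T : SimpleGraph ι} {bag : ι → Finset V}

noncomputable def node (hTD : IsTreeDecomp G T bag) (v : V) : ι := (hTD.2.1 v).choose

theorem mem_bag_node (hTD : IsTreeDecomp G T bag) (v : V) : v ∈ bag (hTD.node v) :=
  (hTD.2.1 v).choose_spec

theorem reachableAvoiding (hTD : IsTreeDecomp G T bag) {v : V} {i l l' : ι} (hi : v ∉ bag i)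
    (hl : v ∈ bag l) (hl' : v ∈ bag l') : ReachableAvoiding T i l l' := by
  obtain ⟨q⟩ := (hTD.2.2.2 v).preconnected ⟨l, hl⟩ ⟨l', hl'⟩
  refine ⟨q.map (SimpleGraph.Embedding.induce _).toHom, fun hmem => hi ?_⟩
  obtain ⟨⟨i', hi'⟩, -, rfl⟩ := List.mem_map.mp (q.support_map _ ▸ hmem)
  exact hi'

variable [DecidableEq V]

open Classical in
/-- The vertices of `A` outside `bag i` whose subtrees lie in the same component of `T - i` as
the subtree of `x`. -/
noncomputable def branch (hTD : IsTreeDecomp G T bag) (i : ι) (A : Finset V) (x : V) :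
    Finset V :=
  (A \ bag i).filter fun y => ReachableAvoiding T i (hTD.node x) (hTD.node y)

variable (hTD : IsTreeDecomp G T bag) {i : ι} {A : Finset V}

theorem branch_subset (x : V) : hTD.branch i A x ⊆ A \ bag i := by
  classical
  exact filter_subset _ _

theorem mem_branch_self {x : V} (hx : x ∈ A \ bag i) : x ∈ hTD.branch i A x := by
  classical
  refine mem_filter.mpr ⟨hx, ReachableAvoiding.refl fun h => ?_⟩
  exact (mem_sdiff.mp hx).2 (h ▸ hTD.mem_bag_node x)

theorem branch_eq_of_mem {x y : V} (hy : y ∈ hTD.branch i A x) :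
    hTD.branch i A y = hTD.branch i A x := by
  classical
  have hxy := (mem_filter.mp hy).2
  ext z
  simp only [branch, mem_filter]
  exact and_congr_right fun _ => ⟨hxy.trans, hxy.symm.trans⟩

/-- An edge of `G` between vertices outside `bag i` lies in a common bag, which connects their
subtrees in `T - i`. -/
theorem mem_branch_of_adj {x a b : V} (ha : a ∈ hTD.branch i A x) (hab : G.Adj a b)
    (hb : b ∈ A \ bag i) : b ∈ hTD.branch i A x := by
  classical
  obtain ⟨haA, hxa⟩ := mem_filter.mp ha
  obtain ⟨l, hal, hbl⟩ := hTD.2.2.1 a b hab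
  refine mem_filter.mpr ⟨hb, hxa.trans ?_⟩
  exact (hTD.reachableAvoiding (mem_sdiff.mp haA).2 (hTD.mem_bag_node a) hal).trans
    (hTD.reachableAvoiding (mem_sdiff.mp hb).2 hbl (hTD.mem_bag_node b))

theorem separated_branch {x y : V} (hne : hTD.branch i A x ≠ hTD.branch i A y) :
    Separated G (hTD.branch i A x) (hTD.branch i A y) := by
  refine ⟨disjoint_left.mpr fun z hzx hzy => hne ?_, fun a ha b hb hab => hne ?_⟩
  · rw [← hTD.branch_eq_of_mem hzx, hTD.branch_eq_of_mem hzy]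
  · rw [← hTD.branch_eq_of_mem (hTD.mem_branch_of_adj ha hab (hTD.branch_subset y hb)),
      hTD.branch_eq_of_mem hb]

theorem biUnion_branch : (A \ bag i).biUnion (hTD.branch i A) = A \ bag i :=
  Subset.antisymm (biUnion_subset.mpr fun x _ => hTD.branch_subset x)
    fun x hx => mem_biUnion.mpr ⟨x, hx, hTD.mem_branch_self hx⟩

/-- Take a bag minimising the total distance to the nodes of the vertices of `A ∩ W`. -/
theorem exists_balanced_bag (W A : Finset V) :
    ∃ i, ∀ x ∈ A \ bag i, 2 * #(hTD.branch i A x ∩ W) ≤ #(A ∩ W) := by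
  classical
  have : Nonempty ι := hTD.1.1.nonempty
  let Ψ i := ∑ w ∈ A ∩ W, T.dist i (hTD.node w)
  refine ⟨Function.argmin Ψ, fun x hx => not_lt.mp fun hheavy => ?_⟩
  have hxi : hTD.node x ≠ Function.argmin Ψ := fun h => (mem_sdiff.mp hx).2 (h ▸ hTD.mem_bag_node x)
  obtain ⟨j, hij, hj⟩ := exists_adj_reachableAvoiding hTD.1.1 hxi
  refine Function.not_lt_argmin Ψ j (sum_dist_lt_sum_dist hTD.1 hij hTD.node
    (inter_subset_inter_right ((hTD.branch_subset x).trans sdiff_subset)) (fun w hw => ?_) hheavy)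
  exact hj.trans (mem_filter.mp (mem_inter.mp hw).1).2

end IsTreeDecomp

theorem Nat.size_div_two_add_one {m : ℕ} (hm : m ≠ 0) : (m / 2).size + 1 = m.size := by
  conv_rhs => rw [← Nat.bit_testBit_zero_shiftRight_one m]
  rw [Nat.size_bit (by rwa [Nat.bit_testBit_zero_shiftRight_one]), Nat.shiftRight_one]

theorem Nat.two_pow_size_le (n : ℕ) : 2 ^ n.size ≤ 2 * n + 1 := by
  rcases n.eq_zero_or_pos with rfl | hn
  · simp
  have hs := Nat.size_pos.mpr hn
  have := Nat.lt_size.mp (Nat.sub_one_lt hs.ne')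
  calc 2 ^ n.size = 2 * 2 ^ (n.size - 1) := by rw [← pow_succ']; congr; omega
    _ ≤ 2 * n + 1 := by omega

theorem IsTreeDecomp.nonempty_pathDecompOn {V ι : Type*} [DecidableEq V] {G : SimpleGraph V}
    {T : SimpleGraph ι} {bag : ι → Finset V} (hTD : IsTreeDecomp G T bag) {k : ℕ}
    (hk : ∀ i, #(bag i) ≤ k + 1) {W : Finset V} (hW : ∀ a b, G.Adj a b → a ∈ W ∨ b ∈ W)
    (m : ℕ) (A : Finset V) (hA : #(A ∩ W) ≤ m) :
    Nonempty (PathDecompOn G A ((k + 1) * m.size + 1)) := by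
  induction m using Nat.strong_induction_on generalizing A with
  | _ m ih =>
  by_cases h0 : #(A ∩ W) = 0
  · have hindep : ∀ a ∈ A, ∀ b ∈ A, ¬ G.Adj a b := fun a ha b hb hab => by
      rw [card_eq_zero, eq_empty_iff_forall_notMem] at h0
      rcases hW a b hab with h | h
      exacts [h0 a (mem_inter.mpr ⟨ha, h⟩), h0 b (mem_inter.mpr ⟨hb, h⟩)]
    obtain ⟨D⟩ := PathDecompOn.nonempty_of_forall_not_adj hindep
    exact ⟨D.mono (by omega)⟩
  obtain ⟨i, hi⟩ := hTD.exists_balanced_bag W A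
  have hbranches : Nonempty (PathDecompOn G (A \ bag i) ((k + 1) * (m / 2).size + 1)) := by
    have := PathDecompOn.nonempty_biUnion (G := G) (w := (k + 1) * (m / 2).size + 1)
      ((A \ bag i).image (hTD.branch i A)) id ?_ ?_
    · simpa only [image_biUnion, id_eq, hTD.biUnion_branch] using this
    · simp only [coe_image]
      rintro _ ⟨x, -, rfl⟩ _ ⟨y, -, rfl⟩ hne
      exact hTD.separated_branch hne
    · simp only [mem_image]
      rintro _ ⟨x, hx, rfl⟩
      refine ih (m / 2) (by omega) _ ?_
      show #(hTD.branch i A x ∩ W) ≤ m / 2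
      have := hi x hx
      omega
  obtain ⟨D⟩ := hbranches
  rw [← sdiff_union_inter A (bag i)]
  refine ⟨(D.insertAll (A ∩ bag i)).mono ?_⟩
  have hsep : #(A ∩ bag i) ≤ k + 1 := (card_le_card inter_subset_right).trans (hk i)
  have hsize := Nat.size_div_two_add_one (m := m) (by omega)
  calc (k + 1) * (m / 2).size + 1 + #(A ∩ bag i)
      ≤ (k + 1) * ((m / 2).size + 1) + 1 := by rw [mul_add_one]; omega
    _ = (k + 1) * m.size + 1 := by rw [hsize]

theorem incGraph_adj_mem_map_inl {ν ι : Type*} [Fintype ν] {occ : ι → ν → Option Bool}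
    {a b : ν ⊕ ι} (h : (incGraph occ).Adj a b) : a ∈ univ.map .inl ∨ b ∈ univ.map .inl := by
  cases a <;> cases b <;> simp_all [incGraph]

theorem four_mul_two_pow_mul_size_le (n k : ℕ) :
    4 * 2 ^ ((k + 1) * n.size) * (n + 1) ≤ (n + 2) ^ (4 * (k + 1)) := by
  have h2 : 2 ^ n.size ≤ (n + 2) ^ 2 := (Nat.two_pow_size_le n).trans (by nlinarith)
  have h4 : 4 * (n + 1) ≤ (n + 2) ^ (2 * (k + 1)) :=
    calc 4 * (n + 1) ≤ (n + 2) ^ 2 := by nlinarith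
      _ ≤ (n + 2) ^ (2 * (k + 1)) := Nat.pow_le_pow_right (by omega) (by omega)
  calc 4 * 2 ^ ((k + 1) * n.size) * (n + 1)
      = 4 * (n + 1) * (2 ^ n.size) ^ (k + 1) := by rw [mul_comm (k + 1), pow_mul]; ring
    _ ≤ (n + 2) ^ (2 * (k + 1)) * ((n + 2) ^ 2) ^ (k + 1) :=
        Nat.mul_le_mul h4 (Nat.pow_le_pow_left h2 _)
    _ = (n + 2) ^ (4 * (k + 1)) := by rw [← pow_mul, ← pow_add]; ring_nf

theorem exists_obdd_of_isTreeDecomp {nv k : ℕ} {ι κ : Type*} [Fintype ι] [DecidableEq ι]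
    {occ : ι → Fin nv → Option Bool} {T : SimpleGraph κ} {bag : κ → Finset (Fin nv ⊕ ι)}
    (hTD : IsTreeDecomp (incGraph occ) T bag) (hk : ∀ i, #(bag i) ≤ k + 1) :
    ∃ (π : Fin nv ≃ Fin nv) (D : OBDD nv),
      D.Computes (cnfEval occ) π ∧ D.size ≤ (nv + 2) ^ (4 * (k + 1)) := by
  obtain ⟨D⟩ := hTD.nonempty_pathDecompOn hk (fun _ _ => incGraph_adj_mem_map_inl) nv univ
    ((card_le_card inter_subset_right).trans (by simp))
  obtain ⟨π, O, hO, hsize⟩ := exists_obdd_of_isPathDecomp (p := (k + 1) * nv.size) D.isPathDecomp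
    fun j => D.card_bag_le j
  exact ⟨π, O, hO, hsize.trans (four_mul_two_pow_mul_size_le nv k)⟩

/-- a CNF with n variables whose incidence graph has pathwidth p
has an OBDD of size O(2^p · n); consequently a CNF whose incidence graph has
treewidth k has an OBDD of size n^{O(k)}. -/
theorem stmt18 :
    (∃ C : ℕ, 0 < C ∧
      ∀ (nv nc p rr : ℕ) (occ : Fin nc → Fin nv → Option Bool)
        (B : Fin rr → Finset (Fin nv ⊕ Fin nc)),
        IsPathDecomp (incGraph occ) rr B → (∀ j, (B j).card ≤ p + 1) →
        ∃ (π : Fin nv ≃ Fin nv) (D : OBDD nv),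
          D.Computes (cnfEval occ) π ∧ D.size ≤ C * 2 ^ p * (nv + 1)) ∧
    (∃ C : ℕ, 0 < C ∧
      ∀ (nv nc k : ℕ) (occ : Fin nc → Fin nv → Option Bool)
        (ι : Type) (T : SimpleGraph ι) (bag : ι → Finset (Fin nv ⊕ Fin nc)),
        IsTreeDecomp (incGraph occ) T bag → (∀ i, (bag i).card ≤ k + 1) →
        ∃ (π : Fin nv ≃ Fin nv) (D : OBDD nv),
          D.Computes (cnfEval occ) π ∧ D.size ≤ (nv + 2) ^ (C * (k + 1))) :=
  ⟨⟨4, by norm_num, fun _ _ _ _ _ _ hB hw => exists_obdd_of_isPathDecomp hB hw⟩,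
    ⟨4, by norm_num, fun _ _ _ _ _ _ _ hTD hk => exists_obdd_of_isTreeDecomp hTD hk⟩⟩
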